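/- Let ω : [0,∞) → [0,∞) be nondecreasing with ω(0) = 0, let Θ : ℝ² → ℝ be continuously differentiable with |Θ(x) − Θ(y)| ≤ ω(|x−y|) for all x, y, and suppose x ≠ y are points with Θ(x) − Θ(y) = ω(ξ) where ξ = |x−y| > 0. If ω is differentiable at ξ, then for all vectors u, v ∈ ℝ²: | u·∇Θ(x) − v·∇Θ(y) | ≤ ω'(ξ) |u − v|. -/

import Mathlib

/-!
For `t > 0`, monotonicity of `ω` gives `Θ (x + t u) - Θ (y + t v) ≤ ω (ξ + t ‖u - v‖)`, with
equality at `t = 0`; comparing right derivatives at `t = 0` yields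
`u·∇Θ(x) - v·∇Θ(y) ≤ ω'(ξ) ‖u - v‖`, and replacing `(u, v)` by `(-u, -v)` gives the other sign.
-/

open Real

noncomputable section

abbrev Plane := EuclideanSpace ℝ (Fin 2)

open Filter Topology Set

theorem le_of_hasDerivAt_of_eventually_le_nhdsGT {f g : ℝ → ℝ} {a b t₀ : ℝ}
    (hf : HasDerivAt f a t₀) (hg : HasDerivAt g b t₀) (h₀ : f t₀ = g t₀)
    (hle : ∀ᶠ t in 𝓝[>] t₀, f t ≤ g t) : a ≤ b := by
  refine le_of_tendsto_of_tendsto (hasDerivAt_iff_tendsto_slope.mp hf |>.mono_left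
    (nhdsGT_le_nhdsNE t₀)) (hasDerivAt_iff_tendsto_slope.mp hg |>.mono_left
    (nhdsGT_le_nhdsNE t₀)) ?_
  filter_upwards [hle, self_mem_nhdsWithin] with t hfg (ht : t₀ < t)
  rw [slope_def_field, slope_def_field, h₀]
  gcongr

theorem norm_add_smul_sub_add_smul_le {E : Type*} [SeminormedAddCommGroup E] [NormedSpace ℝ E]
    (x y u v : E) {t : ℝ} (ht : 0 ≤ t) :
    ‖(x + t • u) - (y + t • v)‖ ≤ ‖x - y‖ + t * ‖u - v‖ := by
  have hsplit : (x + t • u) - (y + t • v) = (x - y) + t • (u - v) := by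
    rw [smul_sub]; abel
  rw [hsplit]
  refine (norm_add_le _ _).trans_eq ?_
  rw [norm_smul, Real.norm_of_nonneg ht]

theorem fderiv_apply_sub_fderiv_apply_le_of_modulus_attained {E : Type*}
    [NormedAddCommGroup E] [NormedSpace ℝ E] {ω : ℝ → ℝ} {Θ : E → ℝ} {x y : E} {ω' : ℝ}
    (hmono : MonotoneOn ω (Ici 0)) (hx : DifferentiableAt ℝ Θ x) (hy : DifferentiableAt ℝ Θ y)
    (hmod : ∀ p q : E, Θ p - Θ q ≤ ω ‖p - q‖) (heq : Θ x - Θ y = ω ‖x - y‖)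
    (hder : HasDerivAt ω ω' ‖x - y‖) (u v : E) :
    fderiv ℝ Θ x u - fderiv ℝ Θ y v ≤ ω' * ‖u - v‖ := by
  have hΘ : HasDerivAt (fun t : ℝ => Θ (x + t • u) - Θ (y + t • v))
      (fderiv ℝ Θ x u - fderiv ℝ Θ y v) 0 :=
    (hx.hasFDerivAt.hasLineDerivAt u).sub (hy.hasFDerivAt.hasLineDerivAt v)
  have hω : HasDerivAt (fun t : ℝ => ω (‖x - y‖ + t * ‖u - v‖)) (ω' * ‖u - v‖) 0 := by
    have hline : HasDerivAt (fun t : ℝ => ‖x - y‖ + t * ‖u - v‖) ‖u - v‖ 0 := by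
      simpa using ((hasDerivAt_id (0 : ℝ)).mul_const ‖u - v‖).const_add ‖x - y‖
    have hder₀ : HasDerivAt ω ω' (‖x - y‖ + 0 * ‖u - v‖) := by simpa using hder
    exact hder₀.comp 0 hline
  refine le_of_hasDerivAt_of_eventually_le_nhdsGT hΘ hω (by simpa using heq) ?_
  filter_upwards [self_mem_nhdsWithin] with t (ht : 0 < t)
  exact (hmod _ _).trans (hmono (norm_nonneg _) (mem_Ici.mpr (by positivity))
    (norm_add_smul_sub_add_smul_le x y u v ht.le))

theorem transport_term_estimate (ω : ℝ → ℝ)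
    (hmono : MonotoneOn ω (Set.Ici 0))
    (Θ : Plane → ℝ) (hΘ : ContDiff ℝ 1 Θ)
    (hmod : ∀ x y : Plane, |Θ x - Θ y| ≤ ω ‖x - y‖)
    (x y : Plane) (ξ : ℝ) (hξ : ξ = ‖x - y‖)
    (heq : Θ x - Θ y = ω ξ)
    (ω' : ℝ) (hder : HasDerivAt ω ω' ξ) :
    ∀ u v : Plane, |fderiv ℝ Θ x u - fderiv ℝ Θ y v| ≤ ω' * ‖u - v‖ := by
  subst hξ
  have hdiff := hΘ.differentiable one_ne_zero
  have key := fderiv_apply_sub_fderiv_apply_le_of_modulus_attained hmono (hdiff x) (hdiff y)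
    (fun p q => (le_abs_self _).trans (hmod p q)) heq hder
  intro u v
  have hneg := key (-u) (-v)
  rw [map_neg, map_neg, neg_sub_neg, neg_sub_neg, norm_sub_rev] at hneg
  exact abs_le.mpr ⟨by linarith, key u v⟩
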